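/- Let μ ≥ 0, k ∈ [0,1) and set ν := (μ−1)/(2(1−k)). The function ρ is differentiable on [1,∞) and for all t ≥ 1: ρ'(t)/ρ(t) = μ/t − t^{−k} K_{ν+1}(φ_k(t)) / K_ν(φ_k(t)). -/

import Mathlib

open MeasureTheory Real Set

/-- Modified Bessel function of the second kind,
`K_ν(t) = ∫₀^∞ exp(−t cosh ζ) cosh(νζ) dζ`. -/
noncomputable def besselK (ν : ℝ) (t : ℝ) : ℝ :=
  ∫ ζ in Set.Ioi (0:ℝ), Real.exp (-t * Real.cosh ζ) * Real.cosh (ν * ζ)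

/-- `φ_k(t) = t^{1−k}/(1−k)`. -/
noncomputable def phik (k t : ℝ) : ℝ := t ^ (1 - k) / (1 - k)

/-- `ρ(t) = t^{(1+μ)/2} K_{(μ−1)/(2(1−k))}(φ_k(t))`. -/
noncomputable def rho (μ k t : ℝ) : ℝ :=
  t ^ ((1 + μ) / 2) * besselK ((μ - 1) / (2 * (1 - k))) (phik k t)

/-- `φ(x) = ∫_{S^{N-1}} e^{x·ω} dσ(ω)`, integral over the unit sphere with respect to
the surface measure. -/
noncomputable def sphInt (N : ℕ) (x : EuclideanSpace ℝ (Fin N)) : ℝ :=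
  ∫ ω : Metric.sphere (0 : EuclideanSpace ℝ (Fin N)) 1,
    Real.exp ((inner ℝ x (ω : EuclideanSpace ℝ (Fin N)) : ℝ))
    ∂((volume : Measure (EuclideanSpace ℝ (Fin N))).toSphere)

/-- `ψ(x,t) = φ(x) ρ(t)`. -/
noncomputable def psiF (N : ℕ) (μ k : ℝ) (x : EuclideanSpace ℝ (Fin N)) (t : ℝ) : ℝ :=
  sphInt N x * rho μ k t

/-- The Laplacian (in the `x` variables) as the sum of second directional derivatives. -/
noncomputable def lapl (N : ℕ) (f : EuclideanSpace ℝ (Fin N) → ℝ)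
    (x : EuclideanSpace ℝ (Fin N)) : ℝ :=
  ∑ i : Fin N,
    fderiv ℝ (fun y => fderiv ℝ f y (EuclideanSpace.single i 1)) x (EuclideanSpace.single i 1)

/-- Energy solution of `u_tt − t^{−2k}Δu + (μ/t)u_t = |u_t|^p` on `ℝ^N × [1,T)` with
data `u(·,1) = εf`, `u_t(·,1) = εg`. -/
structure IsEnergySolution (N : ℕ) (k μ p T ε : ℝ)
    (f g : EuclideanSpace ℝ (Fin N) → ℝ)
    (u : EuclideanSpace ℝ (Fin N) → ℝ → ℝ) : Prop where
  cont_u : ContinuousOn (fun q : EuclideanSpace ℝ (Fin N) × ℝ => u q.1 q.2)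
      (Set.univ ×ˢ Set.Ico 1 T)
  cont_ut : ContinuousOn (fun q : EuclideanSpace ℝ (Fin N) × ℝ => deriv (u q.1) q.2)
      (Set.univ ×ˢ Set.Ico 1 T)
  cont_grad : ContinuousOn
      (fun q : EuclideanSpace ℝ (Fin N) × ℝ => gradient (fun y => u y q.2) q.1)
      (Set.univ ×ˢ Set.Ico 1 T)
  init : ∀ x, u x 1 = ε * f x
  weak : ∀ Φ : EuclideanSpace ℝ (Fin N) → ℝ → ℝ,
    ContDiff ℝ (⊤ : ℕ∞) (fun q : EuclideanSpace ℝ (Fin N) × ℝ => Φ q.1 q.2) →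
    HasCompactSupport (fun q : EuclideanSpace ℝ (Fin N) × ℝ => Φ q.1 q.2) →
    ∀ t ∈ Set.Ico (1:ℝ) T,
      (∫ x, deriv (u x) t * Φ x t) - ε * (∫ x, g x * Φ x 1)
        - (∫ s in (1:ℝ)..t, ∫ x, deriv (u x) s * deriv (Φ x) s)
        + (∫ s in (1:ℝ)..t, s ^ (-(2*k)) *
            ∫ x, (inner ℝ (gradient (fun y => u y s) x) (gradient (fun y => Φ y s) x) : ℝ))
        + (∫ s in (1:ℝ)..t, ∫ x, (μ / s) * deriv (u x) s * Φ x s)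
      = ∫ s in (1:ℝ)..t, ∫ x, |deriv (u x) s| ^ p * Φ x s

/-- The support condition: `u(x,t) = 0` whenever `|x| > φ_k(t) + R`. -/
def SupportCondition (N : ℕ) (k R T : ℝ)
    (u : EuclideanSpace ℝ (Fin N) → ℝ → ℝ) : Prop :=
  ∀ x : EuclideanSpace ℝ (Fin N), ∀ t : ℝ, 1 ≤ t → t < T →
    phik k t + R < ‖x‖ → u x t = 0

open Filter

/-! Auxiliary bounds -/

lemma cosh_quad (x : ℝ) : 1 + x^2/2 ≤ Real.cosh x := by
  have h := Real.cosh_sq (x/2)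
  have h2 : Real.cosh x = Real.cosh (2 * (x/2)) := by ring_nf
  rw [h2, Real.cosh_two_mul, h]
  have : (x/2)^2 ≤ Real.sinh (x/2)^2 := by
    rcases le_total 0 (x/2) with hx | hx
    · have := (Real.self_le_sinh_iff).2 hx
      nlinarith [Real.sinh_nonneg_iff.2 hx]
    · have := (Real.sinh_le_self_iff).2 hx
      nlinarith [Real.sinh_nonpos_iff.2 hx]
  nlinarith

lemma cosh_le_exp_abs (x : ℝ) : Real.cosh x ≤ Real.exp |x| := by
  rw [← Real.cosh_abs, Real.cosh_eq]
  have h : Real.exp (-|x|) ≤ Real.exp |x| := Real.exp_le_exp.2 (by linarith [abs_nonneg x])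
  linarith

lemma abs_sinh_le_cosh (x : ℝ) : |Real.sinh x| ≤ Real.cosh x := by
  rw [Real.abs_sinh, ← Real.cosh_abs]
  nlinarith [Real.cosh_sq |x|, Real.cosh_pos (|x|), Real.sinh_nonneg_iff.2 (abs_nonneg x)]

lemma integrable_exp_lin_cosh (s a : ℝ) (hs : 0 < s) :
    IntegrableOn (fun ζ : ℝ => Real.exp (a*ζ - s * Real.cosh ζ)) (Ioi 0) := by
  have hg : Integrable (fun ζ : ℝ => Real.exp (-s + a^2/(2*s)) *
      Real.exp (-(s/2) * (ζ - a/s)^2)) := by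
    exact ((integrable_exp_neg_mul_sq (by linarith : (0:ℝ) < s/2)).comp_sub_right (a/s)).const_mul _
  refine (hg.integrableOn).mono' ?_ ?_
  · exact (Real.continuous_exp.comp (by continuity)).aestronglyMeasurable
  · filter_upwards with ζ
    rw [norm_eq_abs, abs_of_pos (Real.exp_pos _), ← Real.exp_add]
    apply Real.exp_le_exp.2
    have hc := cosh_quad ζ
    have : s * (1 + ζ^2/2) ≤ s * Real.cosh ζ := by nlinarith
    have key : -s + a^2/(2*s) + (-(s/2) * (ζ - a/s)^2) = a*ζ - s*(1 + ζ^2/2) := by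
      field_simp; ring
    linarith

lemma tendsto_exp_lin_cosh (s a : ℝ) (hs : 0 < s) :
    Tendsto (fun ζ : ℝ => Real.exp (a*ζ - s * Real.cosh ζ)) atTop (nhds 0) := by
  apply Real.tendsto_exp_atBot.comp
  have h1 : Tendsto (fun ζ : ℝ => -s + a^2/(2*s) + (-(s/2) * (ζ - a/s)^2)) atTop atBot := by
    apply tendsto_atBot_add_const_left
    apply Tendsto.const_mul_atTop_of_neg (by linarith : -(s/2) < 0)
    exact (tendsto_pow_atTop (two_ne_zero)).comp (tendsto_atTop_add_const_right _ _ tendsto_id)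
  apply tendsto_atBot_mono _ h1
  intro ζ
  have hc := cosh_quad ζ
  have : s * (1 + ζ^2/2) ≤ s * Real.cosh ζ := by nlinarith
  have key : -s + a^2/(2*s) + (-(s/2) * (ζ - a/s)^2) = a*ζ - s*(1 + ζ^2/2) := by
    field_simp; ring
  linarith

lemma integrableOn_of_dom {f : ℝ → ℝ} (hf : AEStronglyMeasurable f (volume.restrict (Ioi 0)))
    {s a : ℝ} (hs : 0 < s) (hb : ∀ ζ : ℝ, 0 < ζ → |f ζ| ≤ Real.exp (a*ζ - s*Real.cosh ζ)) :
    IntegrableOn f (Ioi 0) := by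
  refine (integrable_exp_lin_cosh s a hs).mono' hf ?_
  rw [ae_restrict_iff' measurableSet_Ioi]
  exact ae_of_all _ fun ζ hζ => by rw [norm_eq_abs]; exact hb ζ hζ

/-! Integrability of the kernels -/

lemma besselK_integrand_integrable (ν t : ℝ) (ht : 0 < t) :
    IntegrableOn (fun ζ => Real.exp (-t * Real.cosh ζ) * Real.cosh (ν * ζ)) (Ioi 0) := by
  refine integrableOn_of_dom ?_ ht (a := |ν|) ?_
  · exact (Continuous.mul (by continuity) (by continuity)).aestronglyMeasurable
  · intro ζ hζ
    have h1 : Real.cosh (ν*ζ) ≤ Real.exp (|ν| * ζ) := by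
      have := cosh_le_exp_abs (ν*ζ)
      rwa [abs_mul, abs_of_pos hζ] at this
    rw [abs_of_pos (by positivity)]
    calc Real.exp (-t * Real.cosh ζ) * Real.cosh (ν*ζ)
        ≤ Real.exp (-t * Real.cosh ζ) * Real.exp (|ν| * ζ) :=
          mul_le_mul_of_nonneg_left h1 (Real.exp_pos _).le
      _ = Real.exp (|ν| * ζ - t*Real.cosh ζ) := by rw [← Real.exp_add]; ring_nf

lemma deriv_integrand_integrable (ν t : ℝ) (ht : 0 < t) :
    IntegrableOn (fun ζ => Real.cosh ζ * (Real.exp (-t * Real.cosh ζ) * Real.cosh (ν * ζ)))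
      (Ioi 0) := by
  refine integrableOn_of_dom ?_ ht (a := |ν| + 1) ?_
  · exact (Continuous.mul (by continuity) (Continuous.mul (by continuity) (by continuity))).aestronglyMeasurable
  · intro ζ hζ
    have h1 : Real.cosh (ν*ζ) ≤ Real.exp (|ν| * ζ) := by
      have := cosh_le_exp_abs (ν*ζ)
      rwa [abs_mul, abs_of_pos hζ] at this
    have h2 : Real.cosh ζ ≤ Real.exp ζ := by
      have := cosh_le_exp_abs ζ; rwa [abs_of_pos hζ] at this
    rw [abs_of_pos (by positivity)]
    calc Real.cosh ζ * (Real.exp (-t * Real.cosh ζ) * Real.cosh (ν*ζ))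
        ≤ Real.exp ζ * (Real.exp (-t * Real.cosh ζ) * Real.exp (|ν| * ζ)) := by
          apply mul_le_mul h2 (mul_le_mul_of_nonneg_left h1 (Real.exp_pos _).le)
            (by positivity) (Real.exp_pos _).le
      _ = Real.exp ((|ν|+1)*ζ - t*Real.cosh ζ) := by
          rw [← Real.exp_add, ← Real.exp_add]; ring_nf

lemma sinh_integrand_integrable (ν t : ℝ) (ht : 0 < t) :
    IntegrableOn (fun ζ => Real.sinh ζ * Real.exp (-t * Real.cosh ζ) * Real.sinh (ν * ζ))
      (Ioi 0) := by
  refine integrableOn_of_dom ?_ ht (a := |ν| + 1) ?_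
  · exact (Continuous.mul (Continuous.mul (by continuity) (by continuity)) (by continuity)).aestronglyMeasurable
  · intro ζ hζ
    have h1 : |Real.sinh (ν*ζ)| ≤ Real.exp (|ν| * ζ) := by
      have := (abs_sinh_le_cosh (ν*ζ)).trans (cosh_le_exp_abs (ν*ζ))
      rwa [abs_mul, abs_of_pos hζ] at this
    have h2 : |Real.sinh ζ| ≤ Real.exp ζ := by
      have := (abs_sinh_le_cosh ζ).trans (cosh_le_exp_abs ζ)
      rwa [abs_of_pos hζ] at this
    calc |Real.sinh ζ * Real.exp (-t * Real.cosh ζ) * Real.sinh (ν*ζ)|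
        = |Real.sinh ζ| * Real.exp (-t * Real.cosh ζ) * |Real.sinh (ν*ζ)| := by
          rw [abs_mul, abs_mul, abs_of_pos (Real.exp_pos _)]
      _ ≤ Real.exp ζ * Real.exp (-t * Real.cosh ζ) * Real.exp (|ν| * ζ) := by
          apply mul_le_mul (mul_le_mul_of_nonneg_right h2 (Real.exp_pos _).le) h1
            (abs_nonneg _) (by positivity)
      _ = Real.exp ((|ν|+1)*ζ - t*Real.cosh ζ) := by
          rw [← Real.exp_add, ← Real.exp_add]; ring_nf

/-! Recurrence via integration by parts -/

lemma sinh_integral_eq (ν t : ℝ) (ht : 0 < t) :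
    ∫ ζ in Ioi (0:ℝ), Real.sinh ζ * Real.exp (-t * Real.cosh ζ) * Real.sinh (ν * ζ)
      = (ν / t) * besselK ν t := by
  set f : ℝ → ℝ := fun ζ => (-(1/t)) * (Real.exp (-t * Real.cosh ζ) * Real.sinh (ν * ζ)) with hf
  set f' : ℝ → ℝ := fun ζ =>
    Real.sinh ζ * Real.exp (-t * Real.cosh ζ) * Real.sinh (ν * ζ)
      - (ν / t) * (Real.exp (-t * Real.cosh ζ) * Real.cosh (ν * ζ)) with hf'
  have hderiv : ∀ ζ : ℝ, HasDerivAt f (f' ζ) ζ := by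
    intro ζ
    have h1 : HasDerivAt (fun ζ : ℝ => Real.exp (-t * Real.cosh ζ))
        (-t * Real.sinh ζ * Real.exp (-t * Real.cosh ζ)) ζ := by
      have := ((Real.hasDerivAt_cosh ζ).const_mul (-t)).exp
      convert this using 1; ring
    have h2 : HasDerivAt (fun ζ : ℝ => Real.sinh (ν * ζ)) (ν * Real.cosh (ν * ζ)) ζ := by
      have : HasDerivAt (fun ζ : ℝ => Real.sinh (ν * ζ)) (Real.cosh (ν * ζ) * (ν * 1)) ζ :=
        (Real.hasDerivAt_sinh (ν * ζ)).comp ζ ((hasDerivAt_id ζ).const_mul ν)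
      convert this using 1; ring
    have : HasDerivAt f (-(1 / t) * (-t * Real.sinh ζ * Real.exp (-t * Real.cosh ζ) * Real.sinh (ν * ζ)
        + Real.exp (-t * Real.cosh ζ) * (ν * Real.cosh (ν * ζ)))) ζ :=
      ((h1.mul h2).const_mul (-(1/t)))
    convert this using 1
    simp only [hf']
    field_simp
    ring
  have hint : IntegrableOn f' (Ioi 0) :=
    (sinh_integrand_integrable ν t ht).sub ((besselK_integrand_integrable ν t ht).const_mul _)
  have htend : Tendsto f atTop (nhds 0) := by
    have hbd : ∀ᶠ ζ : ℝ in atTop,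
        ‖f ζ‖ ≤ (1/t) * Real.exp (|ν| * ζ - t * Real.cosh ζ) := by
      filter_upwards [eventually_gt_atTop (0:ℝ)] with ζ hζ
      rw [hf, norm_eq_abs, abs_mul, abs_mul]
      have h1 : |Real.sinh (ν * ζ)| ≤ Real.exp (|ν| * ζ) := by
        have := (abs_sinh_le_cosh (ν*ζ)).trans (cosh_le_exp_abs (ν*ζ))
        rwa [abs_mul, abs_of_pos hζ] at this
      calc |(-(1/t))| * (|Real.exp (-t * Real.cosh ζ)| * |Real.sinh (ν * ζ)|)
          ≤ (1/t) * (Real.exp (-t * Real.cosh ζ) * Real.exp (|ν| * ζ)) := by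
            rw [abs_neg, abs_of_pos (by positivity), abs_of_pos (Real.exp_pos _)]
            exact mul_le_mul_of_nonneg_left
              (mul_le_mul_of_nonneg_left h1 (Real.exp_pos _).le) (by positivity)
        _ = (1/t) * Real.exp (|ν| * ζ - t * Real.cosh ζ) := by
            rw [← Real.exp_add]; ring_nf
    refine squeeze_zero_norm' hbd ?_
    have := (tendsto_exp_lin_cosh t |ν| ht).const_mul (1/t)
    simpa using this
  have key := integral_Ioi_of_hasDerivAt_of_tendsto' (f := f) (f' := f')
    (fun x _ => hderiv x) hint htend
  have hf0 : f 0 = 0 := by simp [hf]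
  rw [hf0, sub_zero] at key
  have := integral_sub (sinh_integrand_integrable ν t ht)
    ((besselK_integrand_integrable ν t ht).const_mul (ν/t))
  rw [hf'] at key
  rw [key] at this
  have h3 : ∫ ζ in Ioi (0:ℝ), (ν/t) * (Real.exp (-t * Real.cosh ζ) * Real.cosh (ν * ζ))
      = (ν/t) * besselK ν t := by
    rw [MeasureTheory.integral_const_mul]; rfl
  linarith [this, h3]

lemma besselK_rec (ν t : ℝ) (ht : 0 < t) :
    ∫ ζ in Ioi (0:ℝ), Real.cosh ζ * (Real.exp (-t * Real.cosh ζ) * Real.cosh (ν * ζ))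
      = besselK (ν + 1) t - (ν / t) * besselK ν t := by
  have hsplit : ∀ ζ : ℝ,
      Real.cosh ζ * (Real.exp (-t * Real.cosh ζ) * Real.cosh (ν * ζ))
        = Real.exp (-t * Real.cosh ζ) * Real.cosh ((ν + 1) * ζ)
          - Real.sinh ζ * Real.exp (-t * Real.cosh ζ) * Real.sinh (ν * ζ) := by
    intro ζ
    have : (ν + 1) * ζ = ν * ζ + ζ := by ring
    rw [this, Real.cosh_add]
    ring
  rw [MeasureTheory.setIntegral_congr_fun measurableSet_Ioi (fun ζ _ => hsplit ζ)]
  rw [MeasureTheory.integral_sub (besselK_integrand_integrable (ν+1) t ht)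
    (sinh_integrand_integrable ν t ht), sinh_integral_eq ν t ht]
  rfl

lemma besselK_hasDerivAt (ν t : ℝ) (ht : 0 < t) :
    HasDerivAt (besselK ν) ((ν / t) * besselK ν t - besselK (ν + 1) t) t := by
  set F : ℝ → ℝ → ℝ := fun x ζ => Real.exp (-x * Real.cosh ζ) * Real.cosh (ν * ζ) with hF
  set F' : ℝ → ℝ → ℝ := fun x ζ =>
    -(Real.cosh ζ * (Real.exp (-x * Real.cosh ζ) * Real.cosh (ν * ζ))) with hF'
  have key := hasDerivAt_integral_of_dominated_loc_of_deriv_le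
    (μ := volume.restrict (Ioi (0:ℝ))) (F := F) (F' := F') (x₀ := t)
    (bound := fun ζ => Real.cosh ζ * (Real.exp (-(t/2) * Real.cosh ζ) * Real.cosh (ν * ζ)))
    (Metric.ball_mem_nhds t (half_pos ht))
    (Eventually.of_forall fun x =>
      ((Real.continuous_exp.comp (by continuity)).mul (by continuity)).aestronglyMeasurable)
    (besselK_integrand_integrable ν t ht)
    ((continuous_cosh.mul ((Real.continuous_exp.comp (by continuity)).mul
      (by continuity))).neg.aestronglyMeasurable)
    ?_ (deriv_integrand_integrable ν (t/2) (half_pos ht)) ?_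
  · obtain ⟨-, hd⟩ := key
    have : HasDerivAt (besselK ν) (∫ ζ in Ioi (0:ℝ), F' t ζ) t := hd
    have heq : ∫ ζ in Ioi (0:ℝ), F' t ζ = (ν / t) * besselK ν t - besselK (ν + 1) t := by
      rw [hF']
      rw [MeasureTheory.integral_neg, besselK_rec ν t ht]
      ring
    rwa [heq] at this
  · rw [ae_restrict_iff' measurableSet_Ioi]
    refine ae_of_all _ fun ζ _ x hx => ?_
    have hx2 : t/2 ≤ x := by
      rw [Metric.mem_ball, Real.dist_eq, abs_lt] at hx
      linarith
    rw [hF', norm_neg, norm_eq_abs, abs_of_pos (by positivity)]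
    have : Real.exp (-x * Real.cosh ζ) ≤ Real.exp (-(t/2) * Real.cosh ζ) := by
      apply Real.exp_le_exp.2
      nlinarith [Real.cosh_pos ζ]
    have hc := Real.cosh_pos ζ
    have hcb := Real.cosh_pos (ν * ζ)
    exact mul_le_mul_of_nonneg_left (mul_le_mul_of_nonneg_right this hcb.le) hc.le
  · refine ae_of_all _ fun ζ x _ => ?_
    have h1 : HasDerivAt (fun x : ℝ => Real.exp (-x * Real.cosh ζ))
        (-Real.cosh ζ * Real.exp (-x * Real.cosh ζ)) x := by
      have : HasDerivAt (fun x : ℝ => Real.exp (-x * Real.cosh ζ))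
          (Real.exp (-x * Real.cosh ζ) * (-1 * Real.cosh ζ)) x :=
        (((hasDerivAt_id x).neg.mul_const (Real.cosh ζ)).exp)
      convert this using 1 <;> ring_nf
    have : HasDerivAt (fun x => F x ζ)
        (-Real.cosh ζ * Real.exp (-x * Real.cosh ζ) * Real.cosh (ν * ζ)) x :=
      h1.mul_const (Real.cosh (ν * ζ))
    have heq : F' x ζ = -Real.cosh ζ * Real.exp (-x * Real.cosh ζ) * Real.cosh (ν * ζ) := by
      simp only [hF']; ring
    rw [heq]; exact this

lemma besselK_pos (ν t : ℝ) (ht : 0 < t) : 0 < besselK ν t := by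
  rw [besselK]
  have hint := besselK_integrand_integrable ν t ht
  rw [MeasureTheory.integral_pos_iff_support_of_nonneg_ae]
  · have hsupp : Function.support (fun ζ => Real.exp (-t * Real.cosh ζ) * Real.cosh (ν * ζ))
        = univ := by
      rw [Set.eq_univ_iff_forall]
      intro ζ
      rw [Function.mem_support]
      positivity
    rw [hsupp, Measure.restrict_apply_univ, Real.volume_Ioi]
    exact ENNReal.zero_lt_top
  · exact ae_of_all _ fun ζ => by positivity
  · exact hint

lemma rho_hasDerivAt (μ k : ℝ) (hk1 : k < 1) {t : ℝ} (ht : 1 ≤ t) :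
    HasDerivAt (rho μ k)
      (((1 + μ)/2) * t ^ ((1 + μ)/2 - 1) * besselK ((μ - 1) / (2 * (1 - k))) (phik k t)
        + t ^ ((1 + μ)/2) *
          ((((μ - 1) / (2 * (1 - k))) / phik k t * besselK ((μ - 1) / (2 * (1 - k))) (phik k t)
            - besselK ((μ - 1) / (2 * (1 - k)) + 1) (phik k t)) * t ^ (-k))) t := by
  have ht0 : (0:ℝ) < t := lt_of_lt_of_le one_pos ht
  have hk : (0:ℝ) < 1 - k := by linarith
  have hφ : 0 < phik k t := div_pos (Real.rpow_pos_of_pos ht0 _) hk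
  have hφd : HasDerivAt (phik k) (t ^ (-k)) t := by
    have h := (Real.hasDerivAt_rpow_const (p := 1 - k) (Or.inl ht0.ne')).div_const (1 - k)
    have he : (1 - k) * t ^ (1 - k - 1) / (1 - k) = t ^ (-k) := by
      rw [mul_div_cancel_left₀ _ hk.ne']
      norm_num
    rw [he] at h
    exact h
  have hKd := besselK_hasDerivAt ((μ - 1) / (2 * (1 - k))) (phik k t) hφ
  have hcomp := hKd.comp t hφd
  have hpow := Real.hasDerivAt_rpow_const (p := (1 + μ)/2) (Or.inl ht0.ne') (x := t)
  have := hpow.mul hcomp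
  exact this




/-- Logarithmic derivative identity
`ρ'(t)/ρ(t) = μ/t − t^{−k} K_{ν+1}(φ_k(t))/K_ν(φ_k(t))` with `ν = (μ−1)/(2(1−k))`. -/
theorem rho_log_deriv_formula (μ k : ℝ) (hμ : 0 ≤ μ) (hk0 : 0 ≤ k) (hk1 : k < 1) :
    (∀ t : ℝ, 1 ≤ t → DifferentiableAt ℝ (rho μ k) t) ∧
    ∀ t : ℝ, 1 ≤ t →
      deriv (rho μ k) t / rho μ k t =
        μ / t - t ^ (-k) * besselK ((μ - 1) / (2 * (1 - k)) + 1) (phik k t)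
          / besselK ((μ - 1) / (2 * (1 - k))) (phik k t) := by
  constructor
  · exact fun t ht => (rho_hasDerivAt μ k hk1 ht).differentiableAt
  · intro t ht
    have ht0 : (0:ℝ) < t := lt_of_lt_of_le one_pos ht
    have hk : (0:ℝ) < 1 - k := by linarith
    have hφ : 0 < phik k t := div_pos (Real.rpow_pos_of_pos ht0 _) hk
    set ν := (μ - 1) / (2 * (1 - k)) with hν
    set K := besselK ν (phik k t) with hK
    set K1 := besselK (ν + 1) (phik k t) with hK1
    set P := t ^ ((1 + μ)/2) with hP
    set C := t ^ (-k) with hC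
    have hKpos : 0 < K := besselK_pos ν (phik k t) hφ
    have hPpos : 0 < P := Real.rpow_pos_of_pos ht0 _
    have hrho : rho μ k t = P * K := rfl
    have hder : deriv (rho μ k) t
        = ((1 + μ)/2) * t ^ ((1 + μ)/2 - 1) * K + P * ((ν / phik k t * K - K1) * C) :=
      (rho_hasDerivAt μ k hk1 ht).deriv
    have hB : t ^ ((1 + μ)/2 - 1) = P / t := by
      rw [hP, Real.rpow_sub ht0, Real.rpow_one]
    have hQ : C * (ν / phik k t) = (μ - 1) / (2 * t) := by
      have hh : C * t = t ^ (1 - k) := by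
        rw [hC, show (1:ℝ) - k = -k + 1 by ring, Real.rpow_add ht0, Real.rpow_one]
      have hCt : C = t ^ (1 - k) / t := by
        rw [← hh, mul_div_cancel_right₀ _ ht0.ne']
      have htp : (0:ℝ) < t ^ (1 - k) := Real.rpow_pos_of_pos ht0 _
      rw [hCt, hν, phik]
      field_simp
    rw [hder, hrho, hB]
    rw [div_eq_iff (by positivity : P * K ≠ 0)]
    have expand : (μ / t - C * K1 / K) * (P * K)
        = μ / t * P * K - C * K1 * P := by
      field_simp
    rw [expand]
    linear_combination (P * K) * hQ
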